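/- Reduction of the augmented dynamics to the damped harmonic oscillator on the physical limit: Fix m > 0, k, λ ∈ ℝ, and let F : ℝ⁴ → ℝ⁴ be F(q_a, q_b, π_a, π_b) = (π_a/m + (λ/2m)(q_a − q_b), −π_b/m − (λ/2m)(q_a − q_b), −(λ/2m)(π_a − π_b) − k q_a, (λ/2m)(π_a − π_b) + k q_b). Let z = (q_a, q_b, π_a, π_b) : [0,T] → ℝ⁴ be differentiable with z'(t) = F(z(t)) and z(0) in PL = {q_a = q_b, π_a = −π_b}. Then q_a'(t) = π_a(t)/m and π_a'(t) = −(λ/m) π_a(t) − k q_a(t) for all t ∈ [0,T]; equivalently, q_a is twice differentiable and satisfies the damped oscillator equation m q_a''(t) + λ q_a'(t) + k q_a(t) = 0. -/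

import Mathlib

noncomputable section

/-- The physical-limit subspace `PL = {(q_a, q_b, π_a, π_b) : q_a = q_b, π_a = −π_b}`. -/
def PLset : Set (ℝ × ℝ × ℝ × ℝ) := {z | z.1 = z.2.1 ∧ z.2.2.1 = -z.2.2.2}

/-- The Hamiltonian vector field of the augmented damped harmonic oscillator with mass `m`,
spring constant `k` and damping constant `lam`, in coordinates `(q_a, q_b, π_a, π_b)`. -/
def augF (m k lam : ℝ) (z : ℝ × ℝ × ℝ × ℝ) : ℝ × ℝ × ℝ × ℝ :=
  (z.2.2.1 / m + (lam / (2 * m)) * (z.1 - z.2.1),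
   -z.2.2.2 / m - (lam / (2 * m)) * (z.1 - z.2.1),
   -(lam / (2 * m)) * (z.2.2.1 - z.2.2.2) - k * z.1,
   (lam / (2 * m)) * (z.2.2.1 - z.2.2.2) + k * z.2.1)

/-!
The constraint map `P(q_a, q_b, π_a, π_b) = (q_a - q_b, π_a + π_b)` has `PL` as its kernel, and
it intertwines `F` with the linear field `A(u₁, u₂) = ((λ/m) u₁ + u₂/m, -k u₁)`. Hence `u = P ∘ z`
solves `u' = A u` with `u(0) = 0`, and uniqueness for this linear ODE gives `u ≡ 0`: the trajectory
stays in `PL`, where the first and third components of `F` are `π_a/m` and `-(λ/m) π_a - k q_a`.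
-/

open Set

section ProdDeriv

variable {𝕜 E F : Type*} [NontriviallyNormedField 𝕜] [NormedAddCommGroup E] [NormedSpace 𝕜 E]
  [NormedAddCommGroup F] [NormedSpace 𝕜 F] {f : 𝕜 → E × F} {f' : E × F} {s : Set 𝕜} {x : 𝕜}

theorem HasDerivWithinAt.fst (h : HasDerivWithinAt f f' s x) :
    HasDerivWithinAt (fun y => (f y).1) f'.1 s x :=
  (ContinuousLinearMap.fst 𝕜 E F).hasFDerivAt.comp_hasDerivWithinAt x h

theorem HasDerivWithinAt.snd (h : HasDerivWithinAt f f' s x) :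
    HasDerivWithinAt (fun y => (f y).2) f'.2 s x :=
  (ContinuousLinearMap.snd 𝕜 E F).hasFDerivAt.comp_hasDerivWithinAt x h

end ProdDeriv

section LinearInvariance

variable {E F : Type*} [NormedAddCommGroup E] [NormedSpace ℝ E]
  [NormedAddCommGroup F] [NormedSpace ℝ F]

theorem eqOn_zero_of_hasDerivWithinAt_Icc {g : F → F} {K : NNReal} (hg : LipschitzWith K g)
    (hg0 : g 0 = 0) {u : ℝ → F} {a b : ℝ}
    (hu : ∀ t ∈ Icc a b, HasDerivWithinAt u (g (u t)) (Icc a b) t) (ha : u a = 0) :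
    EqOn u 0 (Icc a b) := by
  have hu' : ∀ t ∈ Ico a b, HasDerivWithinAt u (g (u t)) (Ici t) t := fun t ht =>
    (hu t (Ico_subset_Icc_self ht)).mono_of_mem_nhdsWithin (Icc_mem_nhdsGE_of_mem ht)
  refine ODE_solution_unique (fun _ => hg) (fun t ht => (hu t ht).continuousWithinAt) hu'
    continuousOn_const (fun t _ => ?_) ha
  rw [Pi.zero_apply, hg0]
  exact hasDerivWithinAt_const t (Ici t) 0

theorem map_eq_zero_of_hasDerivWithinAt_Icc {f : E → E} (P : E →L[ℝ] F) (A : F →L[ℝ] F)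
    (hPf : ∀ x, P (f x) = A (P x)) {z : ℝ → E} {a b : ℝ}
    (hz : ∀ t ∈ Icc a b, HasDerivWithinAt z (f (z t)) (Icc a b) t) (ha : P (z a) = 0) :
    ∀ t ∈ Icc a b, P (z t) = 0 :=
  eqOn_zero_of_hasDerivWithinAt_Icc A.lipschitz A.map_zero
    (fun t ht => hPf (z t) ▸ P.hasFDerivAt.comp_hasDerivWithinAt t (hz t ht)) ha

end LinearInvariance

def plConstraint : (ℝ × ℝ × ℝ × ℝ) →L[ℝ] ℝ × ℝ :=
  LinearMap.toContinuousLinearMap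
    { toFun := fun z => (z.1 - z.2.1, z.2.2.1 + z.2.2.2)
      map_add' := fun _ _ => by simp only [Prod.fst_add, Prod.snd_add, Prod.mk_add_mk]; ring_nf
      map_smul' := fun _ _ => by simp [mul_sub, mul_add] }

@[simp]
theorem plConstraint_apply (z : ℝ × ℝ × ℝ × ℝ) :
    plConstraint z = (z.1 - z.2.1, z.2.2.1 + z.2.2.2) := rfl

theorem mem_PLset_iff_plConstraint_eq_zero {z : ℝ × ℝ × ℝ × ℝ} :
    z ∈ PLset ↔ plConstraint z = 0 := by
  simp [PLset, sub_eq_zero, eq_neg_iff_add_eq_zero]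

def plConstraintFlow (m k lam : ℝ) : ℝ × ℝ →L[ℝ] ℝ × ℝ :=
  LinearMap.toContinuousLinearMap
    { toFun := fun u => (lam / m * u.1 + u.2 / m, -k * u.1)
      map_add' := fun _ _ => by simp only [Prod.fst_add, Prod.snd_add, Prod.mk_add_mk]; ring_nf
      map_smul' := fun _ _ => by simp only [Prod.smul_fst, Prod.smul_snd, smul_eq_mul,
        RingHom.id_apply, Prod.smul_mk]; ring_nf }

@[simp]
theorem plConstraintFlow_apply (m k lam : ℝ) (u : ℝ × ℝ) :
    plConstraintFlow m k lam u = (lam / m * u.1 + u.2 / m, -k * u.1) := rfl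

theorem plConstraint_augF (m k lam : ℝ) (z : ℝ × ℝ × ℝ × ℝ) :
    plConstraint (augF m k lam z) = plConstraintFlow m k lam (plConstraint z) := by
  simp only [plConstraint_apply, augF, plConstraintFlow_apply, Prod.mk.injEq]
  constructor <;> ring

theorem augF_of_mem_PLset (m k lam : ℝ) {z : ℝ × ℝ × ℝ × ℝ} (hz : z ∈ PLset) :
    (augF m k lam z).1 = z.2.2.1 / m ∧
      (augF m k lam z).2.2.1 = -(lam / m) * z.2.2.1 - k * z.1 := by
  obtain ⟨hq, hπ⟩ := hz
  simp only [augF, hq, sub_self, mul_zero, add_zero, true_and]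
  rw [hπ]
  ring

theorem augmented_dynamics_reduces_to_damped_oscillator_general
    (m k lam : ℝ) (T : ℝ)
    (z : ℝ → ℝ × ℝ × ℝ × ℝ)
    (hz : ∀ t ∈ Set.Icc (0:ℝ) T,
      HasDerivWithinAt z (augF m k lam (z t)) (Set.Icc 0 T) t)
    (h0 : z 0 ∈ PLset) :
    ∀ t ∈ Set.Icc (0:ℝ) T,
      HasDerivWithinAt (fun s => (z s).1) ((z t).2.2.1 / m) (Set.Icc 0 T) t ∧
      HasDerivWithinAt (fun s => (z s).2.2.1)
        (-(lam / m) * (z t).2.2.1 - k * (z t).1) (Set.Icc 0 T) t := by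
  intro t ht
  have hPL : z t ∈ PLset := mem_PLset_iff_plConstraint_eq_zero.2 <|
    map_eq_zero_of_hasDerivWithinAt_Icc plConstraint (plConstraintFlow m k lam)
      (plConstraint_augF m k lam) hz (mem_PLset_iff_plConstraint_eq_zero.1 h0) t ht
  obtain ⟨hq, hπ⟩ := augF_of_mem_PLset m k lam hPL
  rw [← hq, ← hπ]
  exact ⟨(hz t ht).fst, (hz t ht).snd.snd.fst⟩

/-- **Reduction of the augmented dynamics to the damped harmonic oscillator on the physical
limit.** Along any solution of `z' = F(z)` starting in `PL`, the components `q_a = z.1` and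
`π_a = z.2.2.1` satisfy `q_a' = π_a/m` and `π_a' = −(λ/m) π_a − k q_a`; equivalently, `q_a`
solves the damped oscillator equation `m q_a'' + λ q_a' + k q_a = 0`. -/
theorem augmented_dynamics_reduces_to_damped_oscillator
    (m k lam : ℝ) (hm : 0 < m) (T : ℝ) (hT : 0 ≤ T)
    (z : ℝ → ℝ × ℝ × ℝ × ℝ)
    (hz : ∀ t ∈ Set.Icc (0:ℝ) T,
      HasDerivWithinAt z (augF m k lam (z t)) (Set.Icc 0 T) t)
    (h0 : z 0 ∈ PLset) :
    ∀ t ∈ Set.Icc (0:ℝ) T,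
      HasDerivWithinAt (fun s => (z s).1) ((z t).2.2.1 / m) (Set.Icc 0 T) t ∧
      HasDerivWithinAt (fun s => (z s).2.2.1)
        (-(lam / m) * (z t).2.2.1 - k * (z t).1) (Set.Icc 0 T) t :=
  augmented_dynamics_reduces_to_damped_oscillator_general m k lam T z hz h0
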